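/- arXiv:1504.04428 — 2 statements merged into one kernel-verified Lean document; each statement's English description precedes it below -/
import Mathlib

section
/- In the uniform-channel setting, every iterate of the relative value iteration algorithm is monotone: fix any reference state Q§ ∈ 𝒬 and define V₀(Q) = 0 for all Q and V_{n+1}(Q) = (T V_n)(Q) − (T V_n)(Q§). Then for every n ≥ 0 and all Q¹, Q² ∈ 𝒬 with Q¹ ≤ Q² componentwise, V_n(Q¹) ≤ V_n(Q²). (This is the inductive claim establishing Lemma 2 of the paper, the monotonicity of the value function of the average-cost MDP.) -/
open Finset

/-- State space of the uniform-channel multicast MDP: request queue vectors capped by `N`. -/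
def QSpace (M : ℕ) (N : Fin M → ℕ) : Type :=
  {Q : Fin M → ℕ // ∀ m, Q m ≤ N m}

/-- Next state when content `u` is multicast in state `Q` and arrival `a` occurs. -/
def nextQ {M : ℕ} {N : Fin M → ℕ} (Q : QSpace M N) (u : Fin M) (a : Fin M → ℕ) :
    QSpace M N :=
  ⟨fun m => min ((if m = u then 0 else Q.1 m) + a m) (N m), fun _ => min_le_right _ _⟩

/-- Per-stage cost in the uniform case. -/
noncomputable def gCost {M : ℕ} {N : Fin M → ℕ} (wp wf : ℝ) (p f : Fin M → ℝ)
    (Q : QSpace M N) (u : Fin M) : ℝ :=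
  (∑ m, (Q.1 m : ℝ)) + wp * p u + wf * f u

/-- State-action cost function `J_V(Q,u)`. -/
noncomputable def JCost {M : ℕ} {N : Fin M → ℕ} (𝒜 : Finset (Fin M → ℕ))
    (ρ : (Fin M → ℕ) → ℝ) (wp wf : ℝ) (p f : Fin M → ℝ)
    (V : QSpace M N → ℝ) (Q : QSpace M N) (u : Fin M) : ℝ :=
  gCost wp wf p f Q u + ∑ a ∈ 𝒜, ρ a * V (nextQ Q u a)

/-- Bellman operator `(T V)(Q) = min_u J_V(Q,u)`. -/
noncomputable def TBell {M : ℕ} (hM : 1 ≤ M) {N : Fin M → ℕ} (𝒜 : Finset (Fin M → ℕ))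
    (ρ : (Fin M → ℕ) → ℝ) (wp wf : ℝ) (p f : Fin M → ℝ)
    (V : QSpace M N → ℝ) (Q : QSpace M N) : ℝ :=
  haveI : Nonempty (Fin M) := Fin.pos_iff_nonempty.mp hM
  Finset.univ.inf' Finset.univ_nonempty (fun u => JCost 𝒜 ρ wp wf p f V Q u)

/-- Iterates of the relative value iteration algorithm with reference state `Qref`:
`V₀ = 0` and `V_{n+1}(Q) = (T V_n)(Q) - (T V_n)(Qref)`. -/
noncomputable def Vseq {M : ℕ} (hM : 1 ≤ M) {N : Fin M → ℕ} (𝒜 : Finset (Fin M → ℕ))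
    (ρ : (Fin M → ℕ) → ℝ) (wp wf : ℝ) (p f : Fin M → ℝ)
    (Qref : QSpace M N) : ℕ → QSpace M N → ℝ
  | 0 => fun _ => 0
  | n + 1 => fun Q =>
      TBell hM 𝒜 ρ wp wf p f (Vseq hM 𝒜 ρ wp wf p f Qref n) Q -
        TBell hM 𝒜 ρ wp wf p f (Vseq hM 𝒜 ρ wp wf p f Qref n) Qref

/-- Every iterate of relative value iteration is componentwise monotone. -/
theorem rvia_iterates_monotone
    {M : ℕ} (hM : 1 ≤ M) (N : Fin M → ℕ)
    (𝒜 : Finset (Fin M → ℕ)) (ρ : (Fin M → ℕ) → ℝ)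
    (hρ0 : ∀ a ∈ 𝒜, 0 ≤ ρ a) (hρ1 : ∑ a ∈ 𝒜, ρ a = 1)
    (wp wf : ℝ) (p f : Fin M → ℝ) (Qref : QSpace M N) :
    ∀ (n : ℕ) (Q₁ Q₂ : QSpace M N), Q₁.1 ≤ Q₂.1 →
      Vseq hM 𝒜 ρ wp wf p f Qref n Q₁ ≤ Vseq hM 𝒜 ρ wp wf p f Qref n Q₂ := by
  haveI : Nonempty (Fin M) := Fin.pos_iff_nonempty.mp hM
  have hJ : ∀ (V : QSpace M N → ℝ),
      (∀ Q₁ Q₂ : QSpace M N, Q₁.1 ≤ Q₂.1 → V Q₁ ≤ V Q₂) →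
      ∀ (Q₁ Q₂ : QSpace M N), Q₁.1 ≤ Q₂.1 → ∀ u,
      JCost 𝒜 ρ wp wf p f V Q₁ u ≤ JCost 𝒜 ρ wp wf p f V Q₂ u := by
    intro V hV Q₁ Q₂ hle u
    unfold JCost gCost
    gcongr with m _ a ha
    · exact Nat.cast_le.mpr (hle m)
    · exact hρ0 a ha
    · refine hV _ _ fun m => ?_
      simp only [nextQ]
      exact min_le_min (Nat.add_le_add_right (by split <;> simp [hle m]) _) le_rfl
  have hT : ∀ (V : QSpace M N → ℝ),
      (∀ Q₁ Q₂ : QSpace M N, Q₁.1 ≤ Q₂.1 → V Q₁ ≤ V Q₂) →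
      ∀ (Q₁ Q₂ : QSpace M N), Q₁.1 ≤ Q₂.1 →
      TBell hM 𝒜 ρ wp wf p f V Q₁ ≤ TBell hM 𝒜 ρ wp wf p f V Q₂ := by
    intro V hV Q₁ Q₂ hle
    unfold TBell
    exact Finset.le_inf' _ _ fun u hu => (Finset.inf'_le _ hu).trans (hJ V hV Q₁ Q₂ hle u)
  intro n
  induction n with
  | zero => intro _ _ _; simp [Vseq]
  | succ n ih =>
    intro Q₁ Q₂ hle
    simp only [Vseq]
    have := hT _ ih Q₁ Q₂ hle
    linarith
end

section
/- In the uniform-channel setting, the state-action cost difference is monotone in the multicast queue (Lemma 3 of the paper): let V : 𝒬 → ℝ be monotone. Then for all Q ∈ 𝒬, all u, v ∈ Fin M with v ≠ u, and Q u < N u (so Q + e_u ∈ 𝒬), one has J_V(Q + e_u, u) − J_V(Q + e_u, v) ≤ J_V(Q, u) − J_V(Q, v), where Q + e_u denotes the state obtained from Q by increasing component u by 1. -/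
open Finset

/-- The state `Q + e_u`: component `u` is increased by 1 (requires `Q u < N u`). -/
def addE {M : ℕ} {N : Fin M → ℕ} (Q : QSpace M N) (u : Fin M) (h : Q.1 u < N u) :
    QSpace M N :=
  ⟨Function.update Q.1 u (Q.1 u + 1), by
    intro m
    rcases eq_or_ne m u with rfl | hm
    · show Function.update Q.1 m (Q.1 m + 1) m ≤ N m
      rw [Function.update_self]; exact h
    · show Function.update Q.1 u (Q.1 u + 1) m ≤ N m
      rw [Function.update_of_ne hm]; exact Q.2 m⟩

/-!
Adding a request to queue `u` raises the stage cost by exactly 1 whatever is multicast.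
Multicasting `u` empties queue `u`, so from `Q + e_u` and from `Q` it leads to the same next
states and the future cost is unchanged; multicasting `v ≠ u` keeps the extra request, so every
next state is componentwise larger and, `V` being monotone, the future cost can only grow.
-/

section UniformMulticast

variable {M : ℕ} {N : Fin M → ℕ}

theorem addE_val_apply (Q : QSpace M N) (u : Fin M) (h : Q.1 u < N u) (m : Fin M) :
    (addE Q u h).1 m = Q.1 m + if m = u then 1 else 0 := by
  rcases eq_or_ne m u with rfl | hm
  · simp [addE]
  · simp [addE, hm]

theorem le_addE (Q : QSpace M N) (u : Fin M) (h : Q.1 u < N u) : Q.1 ≤ (addE Q u h).1 :=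
  fun m => by simp only [addE_val_apply, le_add_iff_nonneg_right, zero_le]

theorem sum_addE (Q : QSpace M N) (u : Fin M) (h : Q.1 u < N u) :
    ∑ m, ((addE Q u h).1 m : ℝ) = ∑ m, (Q.1 m : ℝ) + 1 := by
  simp [addE_val_apply, Finset.sum_add_distrib]

theorem gCost_addE (wp wf : ℝ) (p f : Fin M → ℝ) (Q : QSpace M N) (u v : Fin M)
    (h : Q.1 u < N u) : gCost wp wf p f (addE Q u h) v = gCost wp wf p f Q v + 1 := by
  simp only [gCost, sum_addE]
  ring

theorem nextQ_addE_self (Q : QSpace M N) (u : Fin M) (h : Q.1 u < N u) (a : Fin M → ℕ) :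
    nextQ (addE Q u h) u a = nextQ Q u a := by
  refine Subtype.ext (funext fun m => ?_)
  rcases eq_or_ne m u with rfl | hm
  · simp [nextQ]
  · simp [nextQ, addE_val_apply, hm]

theorem nextQ_mono {Q₁ Q₂ : QSpace M N} (hQ : Q₁.1 ≤ Q₂.1) (v : Fin M) (a : Fin M → ℕ) :
    (nextQ Q₁ v a).1 ≤ (nextQ Q₂ v a).1 := fun m => by
  simp only [nextQ]
  gcongr
  split_ifs
  exacts [le_rfl, hQ m]

theorem sum_mul_nextQ_mono (𝒜 : Finset (Fin M → ℕ)) (ρ : (Fin M → ℕ) → ℝ)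
    (hρ0 : ∀ a ∈ 𝒜, 0 ≤ ρ a) (V : QSpace M N → ℝ)
    (hV : ∀ Q₁ Q₂ : QSpace M N, Q₁.1 ≤ Q₂.1 → V Q₁ ≤ V Q₂)
    {Q₁ Q₂ : QSpace M N} (hQ : Q₁.1 ≤ Q₂.1) (v : Fin M) :
    ∑ a ∈ 𝒜, ρ a * V (nextQ Q₁ v a) ≤ ∑ a ∈ 𝒜, ρ a * V (nextQ Q₂ v a) :=
  Finset.sum_le_sum fun a ha =>
    mul_le_mul_of_nonneg_left (hV _ _ (nextQ_mono hQ v a)) (hρ0 a ha)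

end UniformMulticast

theorem J_diff_monotone_general
    {M : ℕ} (N : Fin M → ℕ)
    (𝒜 : Finset (Fin M → ℕ)) (ρ : (Fin M → ℕ) → ℝ)
    (hρ0 : ∀ a ∈ 𝒜, 0 ≤ ρ a)
    (wp wf : ℝ) (p f : Fin M → ℝ)
    (V : QSpace M N → ℝ)
    (hV : ∀ Q₁ Q₂ : QSpace M N, Q₁.1 ≤ Q₂.1 → V Q₁ ≤ V Q₂) :
    ∀ (Q : QSpace M N) (u v : Fin M), v ≠ u → ∀ (h : Q.1 u < N u),
      JCost 𝒜 ρ wp wf p f V (addE Q u h) u - JCost 𝒜 ρ wp wf p f V (addE Q u h) v ≤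
        JCost 𝒜 ρ wp wf p f V Q u - JCost 𝒜 ρ wp wf p f V Q v := by
  intro Q u v _ h
  have hfuture := sum_mul_nextQ_mono 𝒜 ρ hρ0 V hV (le_addE Q u h) v
  simp only [JCost, gCost_addE, nextQ_addE_self]
  linarith

/-- Monotonicity of the state-action cost difference (Lemma 3): for a monotone value
function `V`, `J_V(Q+e_u,u) - J_V(Q+e_u,v) ≤ J_V(Q,u) - J_V(Q,v)` for every `v ≠ u`. -/
theorem J_diff_monotone
    {M : ℕ} (hM : 1 ≤ M) (N : Fin M → ℕ)
    (𝒜 : Finset (Fin M → ℕ)) (ρ : (Fin M → ℕ) → ℝ)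
    (hρ0 : ∀ a ∈ 𝒜, 0 ≤ ρ a) (hρ1 : ∑ a ∈ 𝒜, ρ a = 1)
    (wp wf : ℝ) (p f : Fin M → ℝ)
    (V : QSpace M N → ℝ)
    (hV : ∀ Q₁ Q₂ : QSpace M N, Q₁.1 ≤ Q₂.1 → V Q₁ ≤ V Q₂) :
    ∀ (Q : QSpace M N) (u v : Fin M), v ≠ u → ∀ (h : Q.1 u < N u),
      JCost 𝒜 ρ wp wf p f V (addE Q u h) u - JCost 𝒜 ρ wp wf p f V (addE Q u h) v ≤
        JCost 𝒜 ρ wp wf p f V Q u - JCost 𝒜 ρ wp wf p f V Q v :=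
  J_diff_monotone_general N 𝒜 ρ hρ0 wp wf p f V hV
end
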